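/- Let 2/3 < α < 2 and E > 0. Then there exist a constant t̃ ∈ ℝ and constants C > 0 such that for all ξ ≥ 1, | ∫₀^{ξ} √(1 - β_E(x)) dx - ξ - τ E ξ^{(2-α)/(2+α)} - t̃ | ≤ C ξ^{-(3α-2)/(2+α)}. In particular, since α > 2/3 the error term tends to 0 as ξ → ∞. -/

import Mathlib

/-!
Writing `K = E / c^α` and `p = 2α/(2+α) ∈ (1/2, 1)`, the integrand is `√(1 + K x^{-p})`.
Taylor's bound `|√(1+u) - 1 - u/2| ≤ u²/8` gives `√(1 + K x^{-p}) = 1 + (K/2) x^{-p} + R(x)` with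
`|R(x)| ≤ (K²/8) x^{-2p}`, which is integrable at infinity because `2p > 1`. Integrating the two
main terms explicitly on `[1, ξ]` and putting `R` into the constant up to its tail `∫_ξ^∞ R`
leaves an error of size `ξ^{1-2p}`; near `0` the integrand is `O(x^{-p/2})`, hence integrable.
-/

open MeasureTheory Set intervalIntegral

lemma sqrt_one_add_le_one_add_sqrt {u : ℝ} (hu : 0 ≤ u) : √(1 + u) ≤ 1 + √u := by
  rw [Real.sqrt_le_iff]
  refine ⟨by positivity, ?_⟩
  nlinarith [Real.sq_sqrt hu, Real.sqrt_nonneg u]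

lemma abs_sqrt_one_add_sub_le {u : ℝ} (hu : 0 ≤ u) :
    |√(1 + u) - 1 - u / 2| ≤ u ^ 2 / 8 := by
  have hs : √(1 + u) ^ 2 = 1 + u := Real.sq_sqrt (by linarith)
  have hs0 : 0 ≤ √(1 + u) := Real.sqrt_nonneg _
  set s := √(1 + u)
  rw [abs_le]
  constructor
  · rcases le_or_gt (1 + u / 2 - u ^ 2 / 8) 0 with h | h
    · linarith
    · have h8 : u ≤ 8 := by nlinarith
      nlinarith [mul_nonneg (mul_nonneg hu hu) (sub_nonneg.2 h8),
        mul_pos h (show (0 : ℝ) < s + (1 + u / 2 - u ^ 2 / 8) by linarith)]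
  · nlinarith [sq_nonneg (s - (1 + u / 2)), sq_nonneg (s + 1 + u / 2)]

section SqrtOneAddRpow

variable {K p : ℝ}

lemma intervalIntegrable_sqrt_one_add_mul_rpow_neg (hK : 0 ≤ K) (hp : p < 2) {b : ℝ}
    (hb : 0 ≤ b) : IntervalIntegrable (fun x ↦ √(1 + K * x ^ (-p))) volume 0 b := by
  have hdom : IntervalIntegrable (fun x ↦ 1 + √K * x ^ (-(p / 2))) volume 0 b :=
    intervalIntegrable_const.add ((intervalIntegrable_rpow' (by linarith)).const_mul _)
  refine hdom.mono_fun' (by fun_prop) ?_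
  rw [uIoc_of_le hb]
  filter_upwards [ae_restrict_mem measurableSet_Ioc] with x hx
  have hsqrt : √(K * x ^ (-p)) = √K * x ^ (-(p / 2)) := by
    rw [Real.sqrt_mul hK, Real.sqrt_eq_rpow (x ^ (-p)), ← Real.rpow_mul hx.1.le]
    ring_nf
  rw [Real.norm_of_nonneg (Real.sqrt_nonneg _), ← hsqrt]
  exact sqrt_one_add_le_one_add_sqrt (mul_nonneg hK (Real.rpow_nonneg hx.1.le _))

noncomputable def sqrtExpansionRemainder (K p x : ℝ) : ℝ :=
  √(1 + K * x ^ (-p)) - 1 - K / 2 * x ^ (-p)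

lemma abs_sqrtExpansionRemainder_le (hK : 0 ≤ K) {x : ℝ} (hx : 0 < x) :
    |sqrtExpansionRemainder K p x| ≤ K ^ 2 / 8 * x ^ (-(2 * p)) := by
  have hsq : (K * x ^ (-p)) ^ 2 = K ^ 2 * x ^ (-(2 * p)) := by
    rw [mul_pow, ← Real.rpow_mul_natCast hx.le]
    ring_nf
  calc |sqrtExpansionRemainder K p x|
      = |√(1 + K * x ^ (-p)) - 1 - K * x ^ (-p) / 2| := by
        rw [sqrtExpansionRemainder]; ring_nf
    _ ≤ (K * x ^ (-p)) ^ 2 / 8 := abs_sqrt_one_add_sub_le (by positivity)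
    _ = K ^ 2 / 8 * x ^ (-(2 * p)) := by rw [hsq]; ring

lemma integrableOn_sqrtExpansionRemainder_Ioi (hK : 0 ≤ K) (hp : 1 / 2 < p) {a : ℝ}
    (ha : 0 < a) : IntegrableOn (sqrtExpansionRemainder K p) (Ioi a) := by
  have hdom := (integrableOn_Ioi_rpow_of_lt (a := -(2 * p)) (by linarith) ha).const_mul (K ^ 2 / 8)
  refine hdom.mono' (by unfold sqrtExpansionRemainder; fun_prop) ?_
  rw [ae_restrict_iff' measurableSet_Ioi]
  filter_upwards with x hx
  exact abs_sqrtExpansionRemainder_le hK (ha.trans hx)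

lemma abs_integral_sqrtExpansionRemainder_Ioi_le (hK : 0 ≤ K) (hp : 1 / 2 < p) {a : ℝ}
    (ha : 0 < a) :
    |∫ x in Ioi a, sqrtExpansionRemainder K p x| ≤ K ^ 2 / (8 * (2 * p - 1)) * a ^ (1 - 2 * p) :=
  calc |∫ x in Ioi a, sqrtExpansionRemainder K p x|
      ≤ ∫ x in Ioi a, K ^ 2 / 8 * x ^ (-(2 * p)) := by
        refine MeasureTheory.abs_integral_le_integral_abs.trans (setIntegral_mono_on
          (integrableOn_sqrtExpansionRemainder_Ioi hK hp ha).abs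
          ((integrableOn_Ioi_rpow_of_lt (a := -(2 * p)) (by linarith) ha).const_mul _)
          measurableSet_Ioi ?_)
        exact fun x hx ↦ abs_sqrtExpansionRemainder_le hK (ha.trans hx)
    _ = K ^ 2 / (8 * (2 * p - 1)) * a ^ (1 - 2 * p) := by
        rw [MeasureTheory.integral_const_mul, integral_Ioi_rpow_of_lt (by linarith) ha,
          show -(2 * p) + 1 = 1 - 2 * p by ring]
        field_simp [show 2 * p - 1 ≠ 0 by linarith, show 1 - 2 * p ≠ 0 by linarith]
        ring

lemma integral_one_add_mul_rpow_neg (hp : p ≠ 1) {ξ : ℝ} (hξ : 1 ≤ ξ) :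
    ∫ x in (1 : ℝ)..ξ, (1 + K / 2 * x ^ (-p)) = ξ - 1 + K / (2 * (1 - p)) * (ξ ^ (1 - p) - 1) := by
  have hp' : -p ≠ -1 := fun h ↦ hp (by linarith)
  have h0 : (0 : ℝ) ∉ uIcc 1 ξ := by rw [uIcc_of_le hξ]; exact fun h ↦ by linarith [h.1]
  rw [integral_add intervalIntegrable_const
      ((intervalIntegral.intervalIntegrable_rpow (Or.inr h0)).const_mul _),
    intervalIntegral.integral_const, intervalIntegral.integral_const_mul,
    integral_rpow (Or.inr ⟨hp', h0⟩), Real.one_rpow, show -p + 1 = 1 - p by ring, smul_eq_mul,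
    mul_one]
  field_simp [sub_ne_zero.2 (Ne.symm hp)]

theorem abs_integral_sqrt_one_add_mul_rpow_neg_sub_le (hK : 0 ≤ K) (hp : 1 / 2 < p)
    (hp2 : p < 2) (hp1 : p ≠ 1) :
    ∃ t : ℝ, ∀ ξ : ℝ, 1 ≤ ξ →
      |(∫ x in (0 : ℝ)..ξ, √(1 + K * x ^ (-p))) - ξ - K / (2 * (1 - p)) * ξ ^ (1 - p) - t|
        ≤ K ^ 2 / (8 * (2 * p - 1)) * ξ ^ (1 - 2 * p) := by
  set f : ℝ → ℝ := fun x ↦ √(1 + K * x ^ (-p))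
  set R := sqrtExpansionRemainder K p
  refine ⟨(∫ x in (0 : ℝ)..1, f x) - 1 - K / (2 * (1 - p)) + ∫ x in Ioi 1, R x,
    fun ξ hξ ↦ ?_⟩
  have hξ0 : 0 < ξ := one_pos.trans_le hξ
  have h0 : (0 : ℝ) ∉ uIcc 1 ξ := by rw [uIcc_of_le hξ]; exact fun h ↦ by linarith [h.1]
  have hR : IntegrableOn R (Ioi 1) := integrableOn_sqrtExpansionRemainder_Ioi hK hp one_pos
  have hf : ∫ x in (0 : ℝ)..ξ, f x = (∫ x in (0 : ℝ)..1, f x) + ∫ x in (1 : ℝ)..ξ, f x := by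
    rw [← integral_interval_sub_left (intervalIntegrable_sqrt_one_add_mul_rpow_neg hK hp2 hξ0.le)
      (intervalIntegrable_sqrt_one_add_mul_rpow_neg hK hp2 zero_le_one)]
    ring
  have hf' : ∫ x in (1 : ℝ)..ξ, f x
      = (∫ x in (1 : ℝ)..ξ, (1 + K / 2 * x ^ (-p))) + ∫ x in (1 : ℝ)..ξ, R x := by
    rw [← integral_add (intervalIntegrable_const.add
      ((intervalIntegral.intervalIntegrable_rpow (Or.inr h0)).const_mul _))
      ((intervalIntegrable_iff_integrableOn_Ioc_of_le hξ).2 (hR.mono_set Ioc_subset_Ioi_self))]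
    congr with x
    simp only [f, R, sqrtExpansionRemainder]
    ring
  rw [hf, hf', integral_one_add_mul_rpow_neg hp1 hξ, ← integral_Ioi_sub_Ioi hR hξ]
  convert abs_integral_sqrtExpansionRemainder_Ioi_le hK hp hξ0 using 1
  rw [← abs_neg]
  congr 1
  ring

end SqrtOneAddRpow

/-- for `2/3 < α < 2` and `E > 0`, with `c = (1+α/2)^{2/(2+α)}`,
`β_E(x) = -E/(c^α x^{2α/(2+α)})` and `τ = ((2+α)/(2(2-α)))·(1+α/2)^{-2α/(2+α)}`, there are
`t̃ ∈ ℝ` and `C > 0` with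
`|∫₀^ξ √(1-β_E) - ξ - τ E ξ^{(2-α)/(2+α)} - t̃| ≤ C ξ^{-(3α-2)/(2+α)}` for all `ξ ≥ 1`. -/
theorem stmt13 (α : ℝ) (hα0 : 2 / 3 < α) (hα2 : α < 2) (E : ℝ) (hE : 0 < E)
    (c : ℝ) (hc : c = (1 + α / 2) ^ ((2 : ℝ) / (2 + α)))
    (β : ℝ → ℝ) (hβ : ∀ x : ℝ, β x = -E / (c ^ α * x ^ (2 * α / (2 + α))))
    (τ : ℝ) (hτ : τ = (2 + α) / (2 * (2 - α)) * (1 + α / 2) ^ (-(2 * α) / (2 + α))) :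
    ∃ ttil : ℝ, ∃ C > (0 : ℝ), ∀ ξ : ℝ, 1 ≤ ξ →
      |(∫ x in (0 : ℝ)..ξ, Real.sqrt (1 - β x)) - ξ - τ * E * ξ ^ ((2 - α) / (2 + α)) - ttil|
        ≤ C * ξ ^ (-(3 * α - 2) / (2 + α)) := by
  set p := 2 * α / (2 + α) with hp
  have hα : 0 < 2 + α := by linarith
  have hbase : 0 < 1 + α / 2 := by linarith
  have hcα : c ^ α = (1 + α / 2) ^ p := by
    rw [hc, ← Real.rpow_mul hbase.le, hp]; congr 1; ring
  have hτE : τ * E = E / c ^ α / (2 * (1 - p)) := by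
    rw [hτ, hcα, neg_div, ← hp, Real.rpow_neg hbase.le, hp]
    field_simp
    ring
  set K := E / c ^ α
  have hK : 0 < K := div_pos hE (by rw [hcα]; positivity)
  have hp1 : 1 / 2 < p := by rw [hp, lt_div_iff₀ hα]; linarith
  have hp2 : p < 1 := by rw [hp, div_lt_one hα]; linarith
  have hβK : ∀ x, 0 ≤ x → 1 - β x = 1 + K * x ^ (-p) := fun x hx ↦ by
    rw [hβ, Real.rpow_neg hx]; ring
  obtain ⟨t, ht⟩ := abs_integral_sqrt_one_add_mul_rpow_neg_sub_le hK.le hp1 (by linarith) hp2.ne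
  refine ⟨t, K ^ 2 / (8 * (2 * p - 1)), div_pos (by positivity) (by linarith), fun ξ hξ ↦ ?_⟩
  have hint : ∫ x in (0 : ℝ)..ξ, √(1 - β x) = ∫ x in (0 : ℝ)..ξ, √(1 + K * x ^ (-p)) :=
    integral_congr fun x hx ↦ by
      rw [uIcc_of_le (zero_le_one.trans hξ)] at hx
      simp only [hβK x hx.1]
  rw [hint, hτE, show (2 - α) / (2 + α) = 1 - p by rw [hp]; field_simp; ring,
    show -(3 * α - 2) / (2 + α) = 1 - 2 * p by rw [hp]; field_simp; ring]
  exact ht ξ hξ
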